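/- arXiv:2212.14444 — 6 statements merged into one kernel-verified Lean document; each statement's English description precedes it below -/
import Mathlib

section
/- Let (Ω, 𝓕, P) be a probability space and 𝓖 ⊆ 𝓕 a sub-σ-algebra. Let θ₁, …, θₙ be integrable real random variables, let θᵢ* = E[θᵢ | 𝓖] denote their conditional expectations, and let θ̂₁, …, θ̂ₙ be 𝓖-measurable real random variables such that each θ̂ᵢ − θᵢ* is square-integrable. Then E[(1/n) Σᵢ₌₁ⁿ (1{θᵢ* ≥ 0} − 1{θ̂ᵢ ≥ 0}) θᵢ] ≤ (E[(1/n) Σᵢ₌₁ⁿ (θ̂ᵢ − θᵢ*)²])^{1/2}. -/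
/-!
Since the selection weights `1{θᵢ* ≥ 0} - 1{θ̂ᵢ ≥ 0}` are bounded and `𝓖`-measurable, the tower
property lets us replace `θᵢ` by `θᵢ*` inside the expectation. Pointwise, the weight times `θᵢ*` is
nonzero only when `θ̂ᵢ` and `θᵢ*` lie on opposite sides of `0`, so it is at most `|θ̂ᵢ - θᵢ*|`.
Cauchy–Schwarz over `i` and Jensen's inequality for the concave square root finish the proof.
-/

open MeasureTheory

lemma abs_ite_sub_ite_le_one (p q : Prop) [Decidable p] [Decidable q] :
    |(if p then (1:ℝ) else 0) - (if q then 1 else 0)| ≤ 1 := by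
  split_ifs <;> norm_num

lemma ite_nonneg_sub_ite_nonneg_mul_le_abs_sub (a b : ℝ) :
    ((if 0 ≤ a then (1:ℝ) else 0) - (if 0 ≤ b then 1 else 0)) * a ≤ |b - a| := by
  rcases abs_cases (b - a) with h | h <;> split_ifs <;> linarith [h.1, h.2]

lemma one_div_card_mul_sum_abs_le_sqrt {ι : Type*} [Fintype ι] (x : ι → ℝ) :
    (1 / Fintype.card ι : ℝ) * ∑ i, |x i| ≤ √((1 / Fintype.card ι : ℝ) * ∑ i, x i ^ 2) := by
  apply Real.le_sqrt_of_sq_le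
  simpa only [one_div_mul_eq_div, sq_abs, Finset.card_univ] using
    sum_div_card_sq_le_sum_sq_div_card (s := Finset.univ) (f := fun i => |x i|)

lemma one_div_mul_sum_selection_gap_le {n : ℕ} (a b : Fin n → ℝ) :
    (1 / n : ℝ) * ∑ i, ((if 0 ≤ a i then (1:ℝ) else 0) - (if 0 ≤ b i then 1 else 0)) * a i
      ≤ √((1 / n : ℝ) * ∑ i, (b i - a i) ^ 2) := by
  calc (1 / n : ℝ) * ∑ i, ((if 0 ≤ a i then (1:ℝ) else 0) - (if 0 ≤ b i then 1 else 0)) * a i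
      ≤ (1 / n : ℝ) * ∑ i, |b i - a i| := by
        gcongr with i
        exact ite_nonneg_sub_ite_nonneg_mul_le_abs_sub (a i) (b i)
    _ ≤ √((1 / n : ℝ) * ∑ i, (b i - a i) ^ 2) := by
        simpa only [Fintype.card_fin] using
          one_div_card_mul_sum_abs_le_sqrt (fun i => b i - a i)

section

variable {Ω : Type*} {m m₀ : MeasurableSpace Ω} {μ : Measure Ω}

lemma integral_mul_condExp_of_bounded (hm : m ≤ m₀) [SigmaFinite (μ.trim hm)]
    {f g : Ω → ℝ} {C : ℝ} (hf : StronglyMeasurable[m] f) (hf_bdd : ∀ ω, ‖f ω‖ ≤ C)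
    (hg : Integrable g μ) :
    ∫ ω, f ω * (μ[g | m]) ω ∂μ = ∫ ω, f ω * g ω ∂μ := by
  have hfg : Integrable (fun ω => f ω * g ω) μ :=
    hg.bdd_mul (hf.mono hm).aestronglyMeasurable (ae_of_all _ hf_bdd)
  calc ∫ ω, f ω * (μ[g | m]) ω ∂μ = ∫ ω, (μ[fun ω => f ω * g ω | m]) ω ∂μ :=
        integral_congr_ae (condExp_mul_of_stronglyMeasurable_left hf hfg hg).symm
    _ = ∫ ω, f ω * g ω ∂μ := integral_condExp hm

lemma integral_sum_mul_condExp_of_bounded (hm : m ≤ m₀) [SigmaFinite (μ.trim hm)] {ι : Type*}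
    (s : Finset ι) {f g : ι → Ω → ℝ} {C : ℝ} (hf : ∀ i, StronglyMeasurable[m] (f i))
    (hf_bdd : ∀ i ω, ‖f i ω‖ ≤ C) (hg : ∀ i, Integrable (g i) μ) :
    ∫ ω, ∑ i ∈ s, f i ω * (μ[g i | m]) ω ∂μ = ∫ ω, ∑ i ∈ s, f i ω * g i ω ∂μ := by
  rw [integral_finsetSum, integral_finsetSum]
  · exact Finset.sum_congr rfl fun i _ =>
      integral_mul_condExp_of_bounded hm (hf i) (hf_bdd i) (hg i)
  · exact fun i _ => (hg i).bdd_mul ((hf i).mono hm).aestronglyMeasurable (ae_of_all _ (hf_bdd i))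
  · exact fun i _ => integrable_condExp.bdd_mul ((hf i).mono hm).aestronglyMeasurable
      (ae_of_all _ (hf_bdd i))

end

section

variable {Ω : Type*} {m₀ : MeasurableSpace Ω} {μ : Measure Ω} {Y : Ω → ℝ}

lemma MeasureTheory.Integrable.sqrt [IsFiniteMeasure μ] (hY : Integrable Y μ)
    (hY_nonneg : 0 ≤ᵐ[μ] Y) :
    Integrable (fun ω => √(Y ω)) μ := by
  have hmeas : AEStronglyMeasurable (fun ω => √(Y ω)) μ :=
    Real.continuous_sqrt.comp_aestronglyMeasurable hY.1
  refine ((memLp_two_iff_integrable_sq hmeas).2 ?_).integrable one_le_two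
  exact hY.congr (hY_nonneg.mono fun ω h => (Real.sq_sqrt h).symm)

lemma integral_sqrt_le_sqrt_integral [IsProbabilityMeasure μ] (hY : Integrable Y μ)
    (hY_nonneg : 0 ≤ᵐ[μ] Y) : ∫ ω, √(Y ω) ∂μ ≤ √(∫ ω, Y ω ∂μ) :=
  Real.strictConcaveOn_sqrt.concaveOn.le_map_integral Real.continuous_sqrt.continuousOn
    isClosed_Ici hY_nonneg hY (hY.sqrt hY_nonneg)

end

theorem utility_maximization_regret_le_general
    {Ω : Type*} [𝓕 : MeasurableSpace Ω] (μ : Measure Ω) [IsProbabilityMeasure μ]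
    (𝓖 : MeasurableSpace Ω) (h𝓖 : 𝓖 ≤ 𝓕)
    (n : ℕ)
    (θ : Fin n → Ω → ℝ) (hθ : ∀ i, Integrable (θ i) μ)
    (θhat : Fin n → Ω → ℝ)
    (hθhat_meas : ∀ i, Measurable[𝓖] (θhat i))
    (hL2 : ∀ i, MemLp (fun ω => θhat i ω - (μ[θ i | 𝓖]) ω) 2 μ) :
    ∫ ω, (1 / n : ℝ) * ∑ i, (((if 0 ≤ (μ[θ i | 𝓖]) ω then (1:ℝ) else 0)
          - (if 0 ≤ θhat i ω then (1:ℝ) else 0)) * θ i ω) ∂μ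
      ≤ (∫ ω, (1 / n : ℝ) * ∑ i, (θhat i ω - (μ[θ i | 𝓖]) ω) ^ 2 ∂μ) ^ ((1:ℝ)/2) := by
  set F : Fin n → Ω → ℝ := fun i ω =>
    (if 0 ≤ (μ[θ i | 𝓖]) ω then (1:ℝ) else 0) - (if 0 ≤ θhat i ω then (1:ℝ) else 0)
  set Y : Ω → ℝ := fun ω => (1 / n : ℝ) * ∑ i, (θhat i ω - (μ[θ i | 𝓖]) ω) ^ 2
  have hF_meas : ∀ i, StronglyMeasurable[𝓖] (F i) := fun i =>
    ((Measurable.ite (measurableSet_le measurable_const stronglyMeasurable_condExp.measurable)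
      measurable_const measurable_const).sub
      (Measurable.ite (measurableSet_le measurable_const (hθhat_meas i))
        measurable_const measurable_const)).stronglyMeasurable
  have hF_bdd : ∀ i ω, ‖F i ω‖ ≤ 1 := fun i ω => abs_ite_sub_ite_le_one _ _
  have hY_int : Integrable Y μ :=
    (integrable_finsetSum _ fun i _ =>
      (memLp_two_iff_integrable_sq (hL2 i).1).1 (hL2 i)).const_mul _
  have hY_nonneg : 0 ≤ᵐ[μ] Y := ae_of_all _ fun ω => by positivity
  calc ∫ ω, (1 / n : ℝ) * ∑ i, F i ω * θ i ω ∂μ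
      = ∫ ω, (1 / n : ℝ) * ∑ i, F i ω * (μ[θ i | 𝓖]) ω ∂μ := by
        rw [integral_const_mul, integral_const_mul,
          integral_sum_mul_condExp_of_bounded h𝓖 _ hF_meas hF_bdd hθ]
    _ ≤ ∫ ω, √(Y ω) ∂μ :=
        integral_mono
          ((integrable_finsetSum _ fun i _ => integrable_condExp.bdd_mul
            ((hF_meas i).mono h𝓖).aestronglyMeasurable (ae_of_all _ (hF_bdd i))).const_mul _)
          (hY_int.sqrt hY_nonneg)
          fun ω => one_div_mul_sum_selection_gap_le (fun i => (μ[θ i | 𝓖]) ω) (fun i => θhat i ω)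
    _ ≤ √(∫ ω, Y ω ∂μ) := integral_sqrt_le_sqrt_integral hY_int hY_nonneg
    _ = _ := Real.sqrt_eq_rpow _

/-- Bayes regret of the plug-in selection rule `1{θ̂ᵢ ≥ 0}` relative to the oracle rule
`1{θᵢ* ≥ 0}`, where `θᵢ* = E[θᵢ | 𝓖]`, is bounded by the root mean squared error of the
posterior-mean estimates. -/
theorem utility_maximization_regret_le
    {Ω : Type*} [𝓕 : MeasurableSpace Ω] (μ : Measure Ω) [IsProbabilityMeasure μ]
    (𝓖 : MeasurableSpace Ω) (h𝓖 : 𝓖 ≤ 𝓕)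
    (n : ℕ) (hn : 1 ≤ n)
    (θ : Fin n → Ω → ℝ) (hθ : ∀ i, Integrable (θ i) μ)
    (θhat : Fin n → Ω → ℝ)
    (hθhat_meas : ∀ i, Measurable[𝓖] (θhat i))
    (hL2 : ∀ i, MemLp (fun ω => θhat i ω - (μ[θ i | 𝓖]) ω) 2 μ) :
    ∫ ω, (1 / n : ℝ) * ∑ i, (((if 0 ≤ (μ[θ i | 𝓖]) ω then (1:ℝ) else 0)
          - (if 0 ≤ θhat i ω then (1:ℝ) else 0)) * θ i ω) ∂μ
      ≤ (∫ ω, (1 / n : ℝ) * ∑ i, (θhat i ω - (μ[θ i | 𝓖]) ω) ^ 2 ∂μ) ^ ((1:ℝ)/2) :=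
  utility_maximization_regret_le_general (𝓕 := 𝓕) μ 𝓖 h𝓖 n θ hθ θhat hθhat_meas hL2
end

section
/- Let n ≥ 1 and let θ*, θ̂ ∈ ℝⁿ and w ∈ ℝⁿ. Let σ be a permutation of {1,…,n} that sorts θ̂ increasingly, i.e. θ̂_{σ(1)} ≤ θ̂_{σ(2)} ≤ … ≤ θ̂_{σ(n)}, and let θ*_{(1)} ≤ θ*_{(2)} ≤ … ≤ θ*_{(n)} denote the increasing rearrangement of the entries of θ*. Then (1/n) Σᵢ₌₁ⁿ wᵢ θ*_{(i)} − (1/n) Σᵢ₌₁ⁿ wᵢ θ*_{σ(i)} ≤ (2‖w‖₂/√n) · √((1/n) Σᵢ₌₁ⁿ (θ̂ᵢ − θᵢ*)²), where ‖w‖₂ = (Σᵢ wᵢ²)^{1/2}. -/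
/-- Rearrangement proposition: ranking by the proxy vector `θ̂` instead of by `θ*` itself
loses, under any weight vector `w` applied in rank order, at most `2‖w‖₂/√n` times the
root mean squared distance between `θ̂` and `θ*`. Here `σ` sorts `θ̂` increasingly and
`π` sorts `θ*` increasingly (so `θ* ∘ π` is the increasing rearrangement of `θ*`). -/
theorem rearrangement_regret_bound
    (n : ℕ) (hn : 1 ≤ n) (θstar θhat w : Fin n → ℝ)
    (σ π : Equiv.Perm (Fin n))
    (hσ : Monotone (fun i => θhat (σ i)))
    (hπ : Monotone (fun i => θstar (π i))) :
    (1 / n : ℝ) * ∑ i, w i * θstar (π i) - (1 / n : ℝ) * ∑ i, w i * θstar (σ i)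
      ≤ (2 * Real.sqrt (∑ i, (w i) ^ 2) / Real.sqrt n) *
        Real.sqrt ((1 / n : ℝ) * ∑ i, (θhat i - θstar i) ^ 2) := by
  have hn0 : (0:ℝ) < n := by exact_mod_cast hn
  set F : Fin n → ℝ := fun i => θstar (π i) with hF
  set G : Fin n → ℝ := fun i => θhat (σ i) with hG
  set D : ℝ := ∑ i, (θhat i - θstar i) ^ 2 with hDdef
  set W : ℝ := ∑ i, (w i) ^ 2 with hWdef
  have hD0 : (0:ℝ) ≤ D := by positivity
  have hW0 : (0:ℝ) ≤ W := by positivity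
  -- Cauchy-Schwarz helper
  have cs : ∀ f g : Fin n → ℝ, ∑ i, f i * g i ≤
      Real.sqrt (∑ i, f i ^ 2) * Real.sqrt (∑ i, g i ^ 2) := by
    intro f g
    have h := Finset.sum_mul_sq_le_sq_mul_sq Finset.univ f g
    calc ∑ i, f i * g i ≤ |∑ i, f i * g i| := le_abs_self _
      _ = Real.sqrt ((∑ i, f i * g i) ^ 2) := (Real.sqrt_sq_eq_abs _).symm
      _ ≤ Real.sqrt ((∑ i, f i ^ 2) * ∑ i, g i ^ 2) := Real.sqrt_le_sqrt h
      _ = _ := Real.sqrt_mul (by positivity) _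
  -- rearrangement: sorted vectors have smaller distance
  have hmono : Monovary F G := Monotone.monovary hπ hσ
  have hcross : ∑ i, θstar i * θhat i ≤ ∑ i, F i * G i := by
    have h := hmono.sum_smul_comp_perm_le_sum_smul (σ := (π.trans σ.symm))
    simp only [smul_eq_mul] at h
    have e1 : ∑ i, F i * G ((π.trans σ.symm) i) = ∑ i, θstar i * θhat i := by
      have : ∀ i, F i * G ((π.trans σ.symm) i) = θstar (π i) * θhat (π i) := by
        intro i; simp [hF, hG]
      rw [Finset.sum_congr rfl fun i _ => this i]
      exact Equiv.sum_comp π (fun j => θstar j * θhat j)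
    rw [e1] at h; exact h
  have hA : ∑ i, (F i - G i) ^ 2 ≤ D := by
    have eF : ∑ i, F i ^ 2 = ∑ i, θstar i ^ 2 := Equiv.sum_comp π (fun j => θstar j ^ 2)
    have eG : ∑ i, G i ^ 2 = ∑ i, θhat i ^ 2 := Equiv.sum_comp σ (fun j => θhat j ^ 2)
    have e1 : ∑ i, (F i - G i) ^ 2
        = ∑ i, F i ^ 2 + ∑ i, G i ^ 2 - 2 * ∑ i, F i * G i := by
      rw [← Finset.sum_add_distrib, Finset.mul_sum, ← Finset.sum_sub_distrib]
      exact Finset.sum_congr rfl fun i _ => by ring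
    have e2 : D = ∑ i, θhat i ^ 2 + ∑ i, θstar i ^ 2 - 2 * ∑ i, θstar i * θhat i := by
      rw [hDdef, ← Finset.sum_add_distrib, Finset.mul_sum, ← Finset.sum_sub_distrib]
      exact Finset.sum_congr rfl fun i _ => by ring
    rw [e1, e2, eF, eG]; linarith
  -- bound the two pieces
  have b1 : ∑ i, w i * (F i - G i) ≤ Real.sqrt W * Real.sqrt D := by
    calc ∑ i, w i * (F i - G i)
        ≤ Real.sqrt W * Real.sqrt (∑ i, (F i - G i) ^ 2) := cs w _
      _ ≤ Real.sqrt W * Real.sqrt D :=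
          mul_le_mul_of_nonneg_left (Real.sqrt_le_sqrt hA) (Real.sqrt_nonneg _)
  have b2 : ∑ i, w i * (G i - θstar (σ i)) ≤ Real.sqrt W * Real.sqrt D := by
    have e : ∑ i, (G i - θstar (σ i)) ^ 2 = D := by
      have : ∀ i, (G i - θstar (σ i)) ^ 2 = (fun j => (θhat j - θstar j) ^ 2) (σ i) := by
        intro i; simp [hG]
      rw [Finset.sum_congr rfl fun i _ => this i]
      exact Equiv.sum_comp σ (fun j => (θhat j - θstar j) ^ 2)
    calc ∑ i, w i * (G i - θstar (σ i))
        ≤ Real.sqrt W * Real.sqrt (∑ i, (G i - θstar (σ i)) ^ 2) := cs w _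
      _ = Real.sqrt W * Real.sqrt D := by rw [e]
  have key : ∑ i, w i * θstar (π i) - ∑ i, w i * θstar (σ i)
      ≤ 2 * Real.sqrt W * Real.sqrt D := by
    have e : ∑ i, w i * θstar (π i) - ∑ i, w i * θstar (σ i)
        = ∑ i, w i * (F i - G i) + ∑ i, w i * (G i - θstar (σ i)) := by
      rw [← Finset.sum_add_distrib, ← Finset.sum_sub_distrib]
      exact Finset.sum_congr rfl fun i _ => by simp [hF, hG]; ring
    rw [e]; linarith
  -- final arithmetic
  have hRHS : (2 * Real.sqrt W / Real.sqrt n) * Real.sqrt ((1 / n : ℝ) * D)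
      = (1 / n : ℝ) * (2 * Real.sqrt W * Real.sqrt D) := by
    have h1 : Real.sqrt ((1 / n : ℝ) * D) = Real.sqrt D / Real.sqrt n := by
      rw [one_div, Real.sqrt_mul (by positivity), Real.sqrt_inv, inv_mul_eq_div]
    have h2 : Real.sqrt n * Real.sqrt n = n := Real.mul_self_sqrt (le_of_lt hn0)
    rw [h1, div_mul_div_comm, h2]; ring
  calc (1 / n : ℝ) * ∑ i, w i * θstar (π i) - (1 / n : ℝ) * ∑ i, w i * θstar (σ i)
      = (1 / n : ℝ) * (∑ i, w i * θstar (π i) - ∑ i, w i * θstar (σ i)) := by ring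
    _ ≤ (1 / n : ℝ) * (2 * Real.sqrt W * Real.sqrt D) :=
        mul_le_mul_of_nonneg_left key (by positivity)
    _ = (2 * Real.sqrt W / Real.sqrt n) * Real.sqrt ((1 / n : ℝ) * D) := hRHS.symm
end

section
/- Fix θ ∈ ℝ, σ > 0 and ω > 0. Let ξ and W be independent standard normal random variables, and define the coupled bootstrap pair Y⁽¹⁾ = θ + σξ + √ω·σW and Y⁽²⁾ = θ + σξ − (σ/√ω)·W. Then the joint law of (Y⁽¹⁾, Y⁽²⁾) — i.e. the pushforward of the product of two standard Gaussian measures on ℝ under the map (ξ, W) ↦ (θ + σξ + √ω σW, θ + σξ − (σ/√ω)W) — equals the product measure N(θ, (1+ω)σ²) ⊗ N(θ, (1+ω⁻¹)σ²). In particular, Y⁽¹⁾ and Y⁽²⁾ are independent, Y⁽¹⁾ ~ N(θ, (1+ω)σ²) and Y⁽²⁾ ~ N(θ, (1+ω⁻¹)σ²). -/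
/-!
With `t = arctan √ω` we have `Y⁽¹⁾ = θ + σ √(1+ω) (cos t ξ + sin t W)` and
`Y⁽²⁾ = θ - (σ √(1+ω) / √ω) (-sin t ξ + cos t W)`. The law of `(ξ, W)` is a centred Gaussian
product measure, hence invariant under rotation, so the two rotated coordinates are again
independent standard normals; an affine map of each gives the claimed marginals.
-/

open MeasureTheory ProbabilityTheory Real

lemma gaussianReal_map_const_add_mul {μ : ℝ} {v : NNReal} (y c : ℝ) :
    (gaussianReal μ v).map (fun x => y + c * x)
      = gaussianReal (c * μ + y) (.mk (c ^ 2) (sq_nonneg _) * v) := by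
  have : (fun x : ℝ => y + c * x) = (y + ·) ∘ (c * ·) := rfl
  rw [this, ← Measure.map_map (measurable_const_add y) (measurable_const_mul c),
    gaussianReal_map_const_mul, gaussianReal_map_const_add]

lemma gaussianReal_prod_map_affine_comp_rotation (v : NNReal) (t y₁ y₂ c₁ c₂ : ℝ) :
    ((gaussianReal 0 v).prod (gaussianReal 0 v)).map
        (Prod.map (fun x => y₁ + c₁ * x) (fun x => y₂ + c₂ * x) ∘
          ContinuousLinearMap.rotation t)
      = (gaussianReal y₁ (.mk (c₁ ^ 2) (sq_nonneg _) * v)).prod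
          (gaussianReal y₂ (.mk (c₂ ^ 2) (sq_nonneg _) * v)) := by
  have h_affine : ∀ y c : ℝ, Measurable fun x : ℝ => y + c * x := fun y c =>
    (measurable_const_mul c).const_add y
  rw [← Measure.map_map ((h_affine y₁ c₁).prodMap (h_affine y₂ c₂)) (by fun_prop),
    IsGaussian.map_rotation_eq_self (by simp [integral_id_gaussianReal]),
    ← Measure.map_prod_map _ _ (h_affine y₁ c₁) (h_affine y₂ c₂),
    gaussianReal_map_const_add_mul, gaussianReal_map_const_add_mul]
  simp

theorem coupled_bootstrap_law_general
    (θ σ ω : ℝ) (hω : 0 < ω) :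
    Measure.map
        (fun p : ℝ × ℝ =>
          (θ + σ * p.1 + Real.sqrt ω * σ * p.2,
           θ + σ * p.1 - (σ / Real.sqrt ω) * p.2))
        ((gaussianReal 0 1).prod (gaussianReal 0 1))
      = (gaussianReal θ (((1 + ω) * σ ^ 2).toNNReal)).prod
          (gaussianReal θ (((1 + ω⁻¹) * σ ^ 2).toNNReal)) := by
  have hsq : √ω ^ 2 = ω := sq_sqrt hω.le
  have hsq1 : √(1 + ω) ^ 2 = 1 + ω := sq_sqrt (by linarith)
  have h_cos : cos (arctan √ω) = 1 / √(1 + ω) := by rw [cos_arctan, hsq]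
  have h_sin : sin (arctan √ω) = √ω / √(1 + ω) := by rw [sin_arctan, hsq]
  have h_factor : (fun p : ℝ × ℝ =>
        (θ + σ * p.1 + Real.sqrt ω * σ * p.2, θ + σ * p.1 - (σ / Real.sqrt ω) * p.2))
      = Prod.map (fun x => θ + σ * √(1 + ω) * x) (fun x => θ + -(σ * √(1 + ω) / √ω) * x) ∘
          ContinuousLinearMap.rotation (arctan √ω) := by
    ext p <;>
    simp only [Function.comp_apply, ContinuousLinearMap.rotation_apply, h_cos, h_sin,
      Prod.map_fst, Prod.map_snd, smul_eq_mul] <;>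
    field_simp <;> ring
  rw [h_factor, gaussianReal_prod_map_affine_comp_rotation]
  congr 1 <;> congr 1 <;> ext <;>
    rw [mul_one, NNReal.coe_mk, Real.coe_toNNReal _ (by positivity)]
  · rw [mul_pow, hsq1]
    ring
  · rw [neg_sq, div_pow, mul_pow, hsq1, hsq]
    field_simp
    ring

/-- Coupled bootstrap: if `ξ, W` are independent standard normals and
`Y⁽¹⁾ = θ + σξ + √ω σW`, `Y⁽²⁾ = θ + σξ − (σ/√ω) W`, then `(Y⁽¹⁾, Y⁽²⁾)` are
independent with `Y⁽¹⁾ ~ N(θ, (1+ω)σ²)` and `Y⁽²⁾ ~ N(θ, (1+ω⁻¹)σ²)`. -/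
theorem coupled_bootstrap_law
    (θ σ ω : ℝ) (hσ : 0 < σ) (hω : 0 < ω) :
    Measure.map
        (fun p : ℝ × ℝ =>
          (θ + σ * p.1 + Real.sqrt ω * σ * p.2,
           θ + σ * p.1 - (σ / Real.sqrt ω) * p.2))
        ((gaussianReal 0 1).prod (gaussianReal 0 1))
      = (gaussianReal θ (((1 + ω) * σ ^ 2).toNNReal)).prod
          (gaussianReal θ (((1 + ω⁻¹) * σ ^ 2).toNNReal)) :=
  coupled_bootstrap_law_general θ σ ω hω
end

section
/- Let f : ℝ → [0,∞) be a Lebesgue-measurable probability density (∫ f = 1) with finite second moment, and let σ(f)² = ∫ z² f(z) dz − (∫ z f(z) dz)² denote its variance. Then for all M > 0 and t > 0, ∫ 1{f(z) ≤ t} f(z) dz ≤ σ(f)²/M² + 2Mt. In particular, if σ(f) > 0, choosing M = t^{−1/3} σ(f)^{2/3} gives ∫ 1{f(z) ≤ t} f(z) dz ≤ 3 t^{2/3} σ(f)^{2/3}. -/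
/-!
Split `ℝ` at distance `M` from the mean `m`. On `[m - M, m + M]` the integrand `1{f ≤ t} f` is at
most `t`, which contributes `2 M t`; off it `(z - m)² / M² ≥ 1`, so Chebyshev's inequality bounds
the remaining mass by `σ² / M²`. The second bound is the first one at the minimising
`M = σ^{2/3} t^{-1/3}`.
-/

open MeasureTheory Set

section SmallDensity

variable {f : ℝ → ℝ}

theorem integrable_mul_of_integrable_sq_mul (hf_nonneg : ∀ z, 0 ≤ f z) (hf_int : Integrable f)
    (hf_m2 : Integrable (fun z => z ^ 2 * f z)) : Integrable (fun z => z * f z) := by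
  refine (hf_int.add hf_m2).mono' (measurable_id.aestronglyMeasurable.mul hf_int.1) ?_
  filter_upwards with z
  have habs : |z| ≤ 1 + z ^ 2 := by nlinarith [sq_abs z, sq_nonneg (|z| - 1)]
  rw [Real.norm_eq_abs, abs_mul, abs_of_nonneg (hf_nonneg z), Pi.add_apply, ← one_add_mul]
  exact mul_le_mul_of_nonneg_right habs (hf_nonneg z)

theorem sub_sq_mul_eq (c : ℝ) :
    (fun z => (z - c) ^ 2 * f z) = fun z => z ^ 2 * f z - 2 * c * (z * f z) + c ^ 2 * f z := by
  ext z; ring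

theorem integrable_sub_sq_mul (hf_int : Integrable f) (hf_m1 : Integrable (fun z => z * f z))
    (hf_m2 : Integrable (fun z => z ^ 2 * f z)) (c : ℝ) :
    Integrable (fun z => (z - c) ^ 2 * f z) := by
  rw [sub_sq_mul_eq]
  exact (hf_m2.sub (hf_m1.const_mul _)).add (hf_int.const_mul _)

theorem integral_sub_sq_mul (hf_int : Integrable f) (hf_m1 : Integrable (fun z => z * f z))
    (hf_m2 : Integrable (fun z => z ^ 2 * f z)) (c : ℝ) :
    ∫ z, (z - c) ^ 2 * f z
      = (∫ z, z ^ 2 * f z) - 2 * c * (∫ z, z * f z) + c ^ 2 * ∫ z, f z := by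
  have hdiff : Integrable (fun z => z ^ 2 * f z - 2 * c * (z * f z)) :=
    hf_m2.sub (hf_m1.const_mul _)
  rw [sub_sq_mul_eq, integral_add hdiff (hf_int.const_mul _),
    integral_sub hf_m2 (hf_m1.const_mul _), integral_const_mul, integral_const_mul]

theorem indicator_le_sub_sq_div_add_indicator_Icc (hf_nonneg : ∀ z, 0 ≤ f z) {t M : ℝ}
    (ht : 0 ≤ t) (hM : 0 < M) (c z : ℝ) :
    {z | f z ≤ t}.indicator f z
      ≤ (z - c) ^ 2 * f z / M ^ 2 + (Icc (c - M) (c + M)).indicator (fun _ => t) z := by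
  by_cases hz : z ∈ Icc (c - M) (c + M)
  · have hle_t : {z | f z ≤ t}.indicator f z ≤ t := by
      by_cases hft : f z ≤ t
      · rwa [indicator_of_mem (show z ∈ {z | f z ≤ t} from hft)]
      · rwa [indicator_of_notMem (show z ∉ {z | f z ≤ t} from hft)]
    rw [indicator_of_mem hz]
    have hweight_nonneg : 0 ≤ (z - c) ^ 2 * f z / M ^ 2 := by
      have := hf_nonneg z
      positivity
    linarith
  · have hfar : M ^ 2 ≤ (z - c) ^ 2 := by
      rw [← mem_Icc_iff_abs_le, not_le] at hz
      nlinarith [sq_abs (c - z), abs_nonneg (c - z)]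
    have hweight : f z ≤ (z - c) ^ 2 * f z / M ^ 2 := by
      rw [le_div_iff₀ (by positivity), mul_comm]
      exact mul_le_mul_of_nonneg_right hfar (hf_nonneg z)
    rw [indicator_of_notMem hz, add_zero]
    exact (indicator_le_self' (fun z _ => hf_nonneg z) z).trans hweight

theorem integral_indicator_setOf_le_le (hf_meas : Measurable f) (hf_nonneg : ∀ z, 0 ≤ f z)
    (hf_int : Integrable f) {c : ℝ} (hc : Integrable (fun z => (z - c) ^ 2 * f z)) {t M : ℝ}
    (ht : 0 ≤ t) (hM : 0 < M) :
    ∫ z, {z | f z ≤ t}.indicator f z ≤ (∫ z, (z - c) ^ 2 * f z) / M ^ 2 + 2 * M * t := by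
  have hnear : Integrable ((Icc (c - M) (c + M)).indicator (fun _ => t)) :=
    (integrable_indicator_iff measurableSet_Icc).mpr (integrableOn_const measure_Icc_lt_top.ne)
  calc ∫ z, {z | f z ≤ t}.indicator f z
      ≤ ∫ z, ((z - c) ^ 2 * f z / M ^ 2 + (Icc (c - M) (c + M)).indicator (fun _ => t) z) :=
        integral_mono (hf_int.indicator (hf_meas measurableSet_Iic)) ((hc.div_const _).add hnear)
          (indicator_le_sub_sq_div_add_indicator_Icc hf_nonneg ht hM c)
    _ = (∫ z, (z - c) ^ 2 * f z) / M ^ 2 + 2 * M * t := by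
        rw [integral_add (hc.div_const _) hnear, integral_div,
          integral_indicator_const _ measurableSet_Icc, Real.volume_real_Icc, smul_eq_mul,
          show c + M - (c - M) = 2 * M by ring, max_eq_left (by positivity)]

theorem sq_div_sq_add_two_mul_mul_eq_of_cbrt {σ t : ℝ} (hσ : 0 < σ) (ht : 0 < t) :
    σ ^ 2 / (σ ^ (2/3 : ℝ) / t ^ (1/3 : ℝ)) ^ 2 + 2 * (σ ^ (2/3 : ℝ) / t ^ (1/3 : ℝ)) * t
      = 3 * t ^ (2/3 : ℝ) * σ ^ (2/3 : ℝ) := by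
  have hcube : ∀ x : ℝ, 0 < x → ∃ y, 0 < y ∧ x = y ^ (3 : ℝ) :=
    fun x hx => ⟨x ^ (1/3 : ℝ), by positivity, by rw [← Real.rpow_mul hx.le]; norm_num⟩
  obtain ⟨a, ha, rfl⟩ := hcube t ht
  obtain ⟨b, hb, rfl⟩ := hcube σ hσ
  simp only [← Real.rpow_mul ha.le, ← Real.rpow_mul hb.le, ← Real.rpow_natCast]
  norm_num
  field_simp
  ring

end SmallDensity

/-- Chebyshev-type bound on the probability that a density is small (Zhang 1997):
for a density `f` with finite second moment and variance `σ(f)²`,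
`∫ 1{f(z) ≤ t} f(z) dz ≤ σ(f)²/M² + 2Mt` for all `M, t > 0`; and if `σ(f) > 0`,
the choice `M = t^{−1/3} σ(f)^{2/3}` gives the bound `3 t^{2/3} σ(f)^{2/3}`. -/
theorem density_small_value_bound
    (f : ℝ → ℝ) (hf_meas : Measurable f) (hf_nonneg : ∀ z, 0 ≤ f z)
    (hf_int : Integrable f) (hf_one : ∫ z, f z = 1)
    (hf_m2 : Integrable (fun z => z ^ 2 * f z)) :
    (∀ M > (0:ℝ), ∀ t > (0:ℝ),
      ∫ z, Set.indicator {z : ℝ | f z ≤ t} f z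
        ≤ ((∫ z, z ^ 2 * f z) - (∫ z, z * f z) ^ 2) / M ^ 2 + 2 * M * t) ∧
    (0 < (∫ z, z ^ 2 * f z) - (∫ z, z * f z) ^ 2 →
      ∀ t > (0:ℝ),
        ∫ z, Set.indicator {z : ℝ | f z ≤ t} f z
          ≤ 3 * t ^ ((2:ℝ)/3) *
            (Real.sqrt ((∫ z, z ^ 2 * f z) - (∫ z, z * f z) ^ 2)) ^ ((2:ℝ)/3)) := by
  have hf_m1 := integrable_mul_of_integrable_sq_mul hf_nonneg hf_int hf_m2
  set m := ∫ z, z * f z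
  have hvar : ∫ z, (z - m) ^ 2 * f z = (∫ z, z ^ 2 * f z) - m ^ 2 := by
    rw [integral_sub_sq_mul hf_int hf_m1 hf_m2, hf_one]
    ring
  have hcentered := integrable_sub_sq_mul hf_int hf_m1 hf_m2 m
  have hchebyshev : ∀ M > (0:ℝ), ∀ t > (0:ℝ), ∫ z, {z | f z ≤ t}.indicator f z
      ≤ ((∫ z, z ^ 2 * f z) - m ^ 2) / M ^ 2 + 2 * M * t := fun M hM t ht =>
    hvar ▸ integral_indicator_setOf_le_le hf_meas hf_nonneg hf_int hcentered ht.le hM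
  refine ⟨hchebyshev, fun hpos t ht => ?_⟩
  set σ := Real.sqrt ((∫ z, z ^ 2 * f z) - m ^ 2)
  have hσ : 0 < σ := Real.sqrt_pos.mpr hpos
  have hσ_sq : (∫ z, z ^ 2 * f z) - m ^ 2 = σ ^ 2 := (Real.sq_sqrt hpos.le).symm
  have := hchebyshev (σ ^ (2/3 : ℝ) / t ^ (1/3 : ℝ)) (by positivity) t ht
  rwa [hσ_sq, sq_div_sq_add_two_mul_mul_eq_of_cbrt hσ ht] at this
end

section
/- Let G₀ be a Borel probability measure on ℝ with mean 0 and variance 1 satisfying simultaneous moment control with parameters A₀ > 0 and α ∈ (0,2], i.e. (∫|τ|^p dG₀(τ))^{1/p} ≤ A₀ p^{1/α} for every p > 0. Then for every p > 0 there exists a constant C depending only on p, α, A₀ (and not on ν, z, or G₀) such that for all ν > 0 and all z ∈ ℝ, the posterior p-th absolute moment in the Gaussian location model satisfies ( ∫ |τ|^p φ((z−τ)/ν) dG₀(τ) ) / ( ∫ φ((z−τ)/ν) dG₀(τ) ) ≤ C (|z| ∨ 1)^p. -/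
/-!
Write `g(τ) = φ((z - τ)/ν)`, which decreases in `|z - τ|`, and `w = φ((|z| + 2)/ν)`.
Then `g ≥ w` on `{|τ| ≤ 2}`, a set of mass at least `3/4` by Chebyshev, so `∫ g ≥ (3/4) w`;
and `g ≤ w` on `{|τ| > M}` with `M = 4 (|z| ∨ 1)`. Splitting the numerator at `M`
bounds it by `M^p ∫ g + w ∫ |τ|^p ≤ (M^p + (4/3) ∫ |τ|^p) ∫ g`, and the moment
control at `p` bounds `∫ |τ|^p` by `(A₀ p^{1/α})^p`, independently of `ν`, `z` and `G₀`.
-/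

open MeasureTheory

/-- The standard normal density `φ(t) = (2π)^{-1/2} exp(−t²/2)`. -/
noncomputable def gaussPdf (t : ℝ) : ℝ := (Real.sqrt (2 * Real.pi))⁻¹ * Real.exp (-(t ^ 2) / 2)

lemma gaussPdf_pos (t : ℝ) : 0 < gaussPdf t := by
  unfold gaussPdf
  positivity

lemma gaussPdf_le_gaussPdf_of_abs_le {a b : ℝ} (h : |a| ≤ |b|) : gaussPdf b ≤ gaussPdf a := by
  have hsq : a ^ 2 ≤ b ^ 2 := sq_le_sq.mpr h
  unfold gaussPdf
  gcongr

lemma continuous_gaussPdf : Continuous gaussPdf := by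
  unfold gaussPdf
  fun_prop

section Integral

variable {X : Type*} [MeasurableSpace X] {μ : Measure X}

lemma integrable_and_integral_le_of_lintegral_le {f : X → ℝ} {K : ℝ} (hf : 0 ≤ f)
    (hfm : AEStronglyMeasurable f μ) (hK : 0 ≤ K)
    (h : ∫⁻ x, ENNReal.ofReal (f x) ∂μ ≤ ENNReal.ofReal K) :
    Integrable f μ ∧ ∫ x, f x ∂μ ≤ K := by
  have hf' : 0 ≤ᵐ[μ] f := Filter.Eventually.of_forall hf
  refine ⟨⟨hfm, (hasFiniteIntegral_iff_ofReal hf').2 (h.trans_lt ENNReal.ofReal_lt_top)⟩, ?_⟩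
  rw [integral_eq_lintegral_of_nonneg_ae hf' hfm]
  exact ENNReal.toReal_le_of_le_ofReal hK h

/-- Since `g ≥ w` on a set of mass `m`, `w ≤ ∫ g / m`; this controls `∫ f g` off `s`,
where `g ≤ w`. -/
lemma integral_mul_div_integral_le {f g : X → ℝ} {s t : Set X} {M K w m : ℝ}
    (hf : Integrable f μ) (hg : Integrable g μ) (hfg : Integrable (fun x ↦ f x * g x) μ)
    (hf0 : 0 ≤ f) (hg0 : 0 ≤ g) (hs : MeasurableSet s) (ht : MeasurableSet t)
    (hM : 0 ≤ M) (hfs : ∀ x ∈ s, f x ≤ M) (hgs : ∀ x ∈ sᶜ, g x ≤ w)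
    (hw : 0 < w) (hgt : ∀ x ∈ t, w ≤ g x) (hm : 0 < m) (hmt : m ≤ μ.real t)
    (hK : ∫ x, f x ∂μ ≤ K) :
    (∫ x, f x * g x ∂μ) / ∫ x, g x ∂μ ≤ M + K / m := by
  have hg0' : 0 ≤ᵐ[μ] g := Filter.Eventually.of_forall hg0
  have hw_le : w * m ≤ ∫ x, g x ∂μ := calc
    w * m ≤ w * μ.real t := by gcongr
    _ ≤ ∫ x in t, g x ∂μ :=
      setIntegral_ge_of_const_le_real ht (ENNReal.toReal_pos_iff.mp (hm.trans_le hmt)).2.ne hgt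
        hg.integrableOn
    _ ≤ ∫ x, g x ∂μ := setIntegral_le_integral hg hg0'
  have hpos : 0 < ∫ x, g x ∂μ := lt_of_lt_of_le (by positivity) hw_le
  have hinside : ∫ x in s, f x * g x ∂μ ≤ M * ∫ x, g x ∂μ := calc
    ∫ x in s, f x * g x ∂μ ≤ ∫ x in s, M * g x ∂μ :=
      setIntegral_mono_on hfg.integrableOn (hg.const_mul M).integrableOn hs
        fun x hx ↦ mul_le_mul_of_nonneg_right (hfs x hx) (hg0 x)
    _ ≤ ∫ x, M * g x ∂μ := setIntegral_le_integral (hg.const_mul M)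
      (Filter.Eventually.of_forall fun x ↦ mul_nonneg hM (hg0 x))
    _ = M * ∫ x, g x ∂μ := integral_const_mul M _
  have houtside : ∫ x in sᶜ, f x * g x ∂μ ≤ w * K := calc
    ∫ x in sᶜ, f x * g x ∂μ ≤ ∫ x in sᶜ, f x * w ∂μ :=
      setIntegral_mono_on hfg.integrableOn (hf.mul_const w).integrableOn hs.compl
        fun x hx ↦ mul_le_mul_of_nonneg_left (hgs x hx) (hf0 x)
    _ ≤ ∫ x, f x * w ∂μ := setIntegral_le_integral (hf.mul_const w)
      (Filter.Eventually.of_forall fun x ↦ mul_nonneg (hf0 x) hw.le)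
    _ = (∫ x, f x ∂μ) * w := integral_mul_const w _
    _ ≤ w * K := by nlinarith
  have hwK : w * K ≤ K * (∫ x, g x ∂μ) / m := by
    rw [le_div_iff₀ hm]
    nlinarith [integral_nonneg (μ := μ) hf0]
  rw [div_le_iff₀ hpos, ← integral_add_compl hs hfg, add_mul, div_mul_eq_mul_div]
  linarith

end Integral

lemma one_sub_div_sq_le_measureReal_abs_le {μ : Measure ℝ} [IsProbabilityMeasure μ] {c : ℝ}
    (hc : 0 < c) (h : Integrable (fun τ ↦ τ ^ 2) μ) :
    1 - (∫ τ, τ ^ 2 ∂μ) / c ^ 2 ≤ μ.real {τ | |τ| ≤ c} := by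
  have hmeas : MeasurableSet {τ : ℝ | |τ| ≤ c} := measurableSet_le measurable_abs measurable_const
  have hsub : {τ : ℝ | |τ| ≤ c}ᶜ ⊆ {τ | c ^ 2 ≤ τ ^ 2} := fun τ (hτ : ¬|τ| ≤ c) ↦
    sq_le_sq.mpr ((abs_of_pos hc).trans_le (not_le.mp hτ).le)
  have markov := mul_meas_ge_le_integral_of_nonneg
    (Filter.Eventually.of_forall fun τ ↦ sq_nonneg τ) h (c ^ 2)
  have hmono : μ.real {τ : ℝ | |τ| ≤ c}ᶜ ≤ μ.real {τ | c ^ 2 ≤ τ ^ 2} := measureReal_mono hsub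
  rw [probReal_compl_eq_one_sub hmeas] at hmono
  rw [sub_le_comm, le_div_iff₀ (by positivity)]
  nlinarith

lemma gaussPdf_div_le_gaussPdf_div {ν a b : ℝ} (hν : 0 < ν) (h : |a| ≤ |b|) :
    gaussPdf (b / ν) ≤ gaussPdf (a / ν) := by
  apply gaussPdf_le_gaussPdf_of_abs_le
  rw [abs_div, abs_div]
  gcongr

lemma gaussPdf_div_sub_ge_of_abs_le {ν z τ c : ℝ} (hν : 0 < ν) (hτ : |τ| ≤ c) :
    gaussPdf ((|z| + c) / ν) ≤ gaussPdf ((z - τ) / ν) := by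
  apply gaussPdf_div_le_gaussPdf_div hν
  rw [abs_of_nonneg (a := |z| + c) (by linarith [abs_nonneg τ, abs_nonneg z])]
  linarith [abs_sub z τ]

lemma gaussPdf_div_sub_le_of_le_abs {ν z τ c : ℝ} (hν : 0 < ν) (hc : 0 ≤ c)
    (hτ : 2 * |z| + c ≤ |τ|) : gaussPdf ((z - τ) / ν) ≤ gaussPdf ((|z| + c) / ν) := by
  apply gaussPdf_div_le_gaussPdf_div hν
  rw [abs_of_nonneg (a := |z| + c) (by positivity), abs_sub_comm]
  linarith [abs_sub_abs_le_abs_sub τ z]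

theorem posterior_moment_bound_general
    (A₀ : ℝ) (hA₀ : 0 < A₀) (α : ℝ)
    (p : ℝ) (hp : 0 < p) :
    ∃ C : ℝ, 0 < C ∧
      ∀ (G₀ : Measure ℝ), IsProbabilityMeasure G₀ →
        (∫ τ, τ ∂G₀) = 0 →
        (∫ τ, τ ^ 2 ∂G₀) = 1 →
        (∀ q : ℝ, 0 < q →
          (∫⁻ τ, ENNReal.ofReal (|τ| ^ q) ∂G₀) ^ (1 / q)
            ≤ ENNReal.ofReal (A₀ * q ^ (1 / α))) →
        ∀ (ν : ℝ), 0 < ν → ∀ z : ℝ,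
          (∫ τ, |τ| ^ p * gaussPdf ((z - τ) / ν) ∂G₀)
              / (∫ τ, gaussPdf ((z - τ) / ν) ∂G₀)
            ≤ C * (|z| ⊔ 1) ^ p := by
  set K := (A₀ * p ^ (1 / α)) ^ p
  refine ⟨4 ^ p + K / (1 - 1 / 2 ^ 2), by positivity, ?_⟩
  intro G₀ _ _ hvar hmom ν hν z
  have hmom_p : ∫⁻ τ, ENNReal.ofReal (|τ| ^ p) ∂G₀ ≤ ENNReal.ofReal K := by
    rw [← ENNReal.ofReal_rpow_of_nonneg (by positivity) hp.le, ← ENNReal.rpow_inv_le_iff hp,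
      ← one_div]
    exact hmom p hp
  obtain ⟨hf, hfK⟩ := integrable_and_integral_le_of_lintegral_le (fun τ ↦ by positivity)
    (measurable_abs.pow_const p).aestronglyMeasurable (by positivity) hmom_p
  have hcheb : 1 - 1 / 2 ^ 2 ≤ G₀.real {τ | |τ| ≤ 2} := by
    simpa only [hvar] using one_sub_div_sq_le_measureReal_abs_le (μ := G₀) two_pos
      (.of_integral_ne_zero (by rw [hvar]; exact one_ne_zero))
  set x := |z| ⊔ 1
  have hg : Continuous fun τ ↦ gaussPdf ((z - τ) / ν) := continuous_gaussPdf.comp (by fun_prop)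
  have hg_bdd : ∀ᵐ τ ∂G₀, ‖gaussPdf ((z - τ) / ν)‖ ≤ gaussPdf 0 := .of_forall fun τ ↦ by
    rw [Real.norm_of_nonneg (gaussPdf_pos _).le]
    exact gaussPdf_le_gaussPdf_of_abs_le (by simp)
  have hg_far : ∀ τ ∈ {τ | |τ| ≤ 4 * x}ᶜ, gaussPdf ((z - τ) / ν) ≤ gaussPdf ((|z| + 2) / ν) :=
    fun τ (hτ : ¬|τ| ≤ 4 * x) ↦ gaussPdf_div_sub_le_of_le_abs hν two_pos.le
      (by linarith [le_max_left |z| 1, le_max_right |z| 1, not_le.mp hτ])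
  calc _ ≤ (4 * x) ^ p + K / (1 - 1 / 2 ^ 2) :=
        integral_mul_div_integral_le hf (.of_bound hg.aestronglyMeasurable _ hg_bdd)
          (hf.mul_bdd hg.aestronglyMeasurable hg_bdd) (fun τ ↦ by positivity)
          (fun τ ↦ (gaussPdf_pos _).le) (measurableSet_le measurable_abs measurable_const)
          (measurableSet_le measurable_abs measurable_const) (by positivity)
          (fun τ hτ ↦ Real.rpow_le_rpow (abs_nonneg τ) hτ hp.le) hg_far (gaussPdf_pos _)
          (fun τ ↦ gaussPdf_div_sub_ge_of_abs_le hν) (by norm_num) hcheb hfK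
    _ ≤ (4 ^ p + K / (1 - 1 / 2 ^ 2)) * x ^ p := by
        have hx : 1 ≤ x ^ p := Real.one_le_rpow (le_max_right _ _) hp.le
        rw [Real.mul_rpow (by norm_num) (by positivity)]
        nlinarith [show 0 ≤ K / (1 - 1 / 2 ^ 2) by positivity]

/-- Posterior moment bound in the Gaussian location model: if `G₀` has mean 0, variance 1,
and simultaneous moment control `(∫|τ|^p dG₀)^{1/p} ≤ A₀ p^{1/α}`, then for every `p > 0`
there is a constant `C = C(p, α, A₀)` such that for all `ν > 0` and `z ∈ ℝ`,
`E[|τ|^p | Z = z] ≤ C (|z| ∨ 1)^p`. -/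
theorem posterior_moment_bound
    (A₀ : ℝ) (hA₀ : 0 < A₀) (α : ℝ) (hα : α ∈ Set.Ioc (0:ℝ) 2)
    (p : ℝ) (hp : 0 < p) :
    ∃ C : ℝ, 0 < C ∧
      ∀ (G₀ : Measure ℝ), IsProbabilityMeasure G₀ →
        (∫ τ, τ ∂G₀) = 0 →
        (∫ τ, τ ^ 2 ∂G₀) = 1 →
        (∀ q : ℝ, 0 < q →
          (∫⁻ τ, ENNReal.ofReal (|τ| ^ q) ∂G₀) ^ (1 / q)
            ≤ ENNReal.ofReal (A₀ * q ^ (1 / α))) →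
        ∀ (ν : ℝ), 0 < ν → ∀ z : ℝ,
          (∫ τ, |τ| ^ p * gaussPdf ((z - τ) / ν) ∂G₀)
              / (∫ τ, gaussPdf ((z - τ) / ν) ∂G₀)
            ≤ C * (|z| ⊔ 1) ^ p :=
  posterior_moment_bound_general A₀ hA₀ α p hp
end

section
/- Let G be a Borel probability measure on ℝ, ν > 0, z ∈ ℝ, and let k ≥ 1 be an integer. Let f_{G,ν}(z) = ∫ φ((z−τ)/ν) ν⁻¹ dG(τ) be the Gaussian mixture density (which satisfies 0 < f_{G,ν}(z) ≤ 1/(√(2π)ν)). Then ( ∫ ((z−τ)/ν)^{2k} φ((z−τ)/ν) ν⁻¹ dG(τ) ) / f_{G,ν}(z) ≤ e · (2k/e)^k · max( (log(1/(√(2π) ν f_{G,ν}(z))))^k , 1 ). -/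
open MeasureTheory

/-- The Gaussian mixture density `f_{G,ν}(z) = ∫ φ((z−τ)/ν) ν⁻¹ dG(τ)`. -/
noncomputable def mixDens (G : Measure ℝ) (ν z : ℝ) : ℝ :=
  ∫ τ, gaussPdf ((z - τ) / ν) * ν⁻¹ ∂G

lemma sqrtTwoPi_pos : 0 < Real.sqrt (2 * Real.pi) := Real.sqrt_pos.2 (by positivity)

lemma gaussPdf_le (t : ℝ) : gaussPdf t ≤ (Real.sqrt (2 * Real.pi))⁻¹ := by
  unfold gaussPdf
  nth_rewrite 2 [← mul_one (Real.sqrt (2 * Real.pi))⁻¹]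
  gcongr
  rw [Real.exp_le_one_iff]; nlinarith [sq_nonneg t]

/-- `y - 1 ≤ y * log y` for `y ≥ 1` (indeed `y > 0`). -/
lemma sub_one_le_mul_log {y : ℝ} (hy : 0 < y) : y - 1 ≤ y * Real.log y := by
  have h := Real.log_le_sub_one_of_pos (inv_pos.2 hy)
  rw [Real.log_inv] at h
  have h2 : y * y⁻¹ = 1 := mul_inv_cancel₀ hy.ne'
  nlinarith

/-- `v ^ k ≤ (k/e)^k * exp v` for `v ≥ 0`, `k ≥ 1`. -/
lemma pow_le_exp_aux (k : ℕ) (hk : 1 ≤ k) {v : ℝ} (hv : 0 ≤ v) :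
    v ^ k ≤ ((k : ℝ) / Real.exp 1) ^ k * Real.exp v := by
  rcases eq_or_lt_of_le hv with h | h
  · rw [← h, zero_pow (by omega)]; positivity
  · have hk0 : (0 : ℝ) < k := by exact_mod_cast Nat.pos_of_ne_zero (by omega)
    have hlog : Real.log (v / k) ≤ v / k - 1 := Real.log_le_sub_one_of_pos (by positivity)
    rw [Real.log_div h.ne' hk0.ne'] at hlog
    have h1 : v ^ k = Real.exp ((k : ℝ) * Real.log v) := by
      rw [← Real.log_pow, Real.exp_log (by positivity)]
    have h2 : ((k : ℝ) / Real.exp 1) ^ k = Real.exp ((k : ℝ) * (Real.log k - 1)) := by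
      rw [Real.exp_nat_mul, Real.exp_sub, Real.exp_log hk0]
    rw [h1, h2, ← Real.exp_add, Real.exp_le_exp]
    have : (k : ℝ) * (Real.log v - Real.log k) ≤ (k : ℝ) * (v / k - 1) := by
      exact mul_le_mul_of_nonneg_left hlog hk0.le
    have hc : (k : ℝ) * (v / k) = v := by field_simp
    nlinarith

/-- `x^(2k) ≤ (2k/(e s))^k * exp(s x²/2)` for `s > 0`. -/
lemma key_pow (k : ℕ) (hk : 1 ≤ k) {s : ℝ} (hs : 0 < s) (x : ℝ) :
    x ^ (2 * k) ≤ (2 * (k : ℝ) / (Real.exp 1 * s)) ^ k * Real.exp (s * x ^ 2 / 2) := by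
  have hv : (0 : ℝ) ≤ s * x ^ 2 / 2 := by positivity
  have hmain := pow_le_exp_aux k hk hv
  have hx : x ^ (2 * k) = ((2 / s) * (s * x ^ 2 / 2)) ^ k := by
    rw [pow_mul]; congr 1; field_simp
  rw [hx, mul_pow]
  calc (2 / s) ^ k * (s * x ^ 2 / 2) ^ k
      ≤ (2 / s) ^ k * (((k : ℝ) / Real.exp 1) ^ k * Real.exp (s * x ^ 2 / 2)) := by
        gcongr
    _ = (2 * (k : ℝ) / (Real.exp 1 * s)) ^ k * Real.exp (s * x ^ 2 / 2) := by
        rw [← mul_assoc, ← mul_pow]; congr 2; field_simp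

/-- MGF identity: `exp(s x²/2) φ(x) ν⁻¹ = (√(2π)ν)^(-s) * (φ(x)ν⁻¹)^(1-s)`. -/
lemma mgf_eq {ν : ℝ} (hν : 0 < ν) {s : ℝ} (x : ℝ) :
    Real.exp (s * x ^ 2 / 2) * (gaussPdf x * ν⁻¹)
      = (Real.sqrt (2 * Real.pi) * ν) ^ (-s) * (gaussPdf x * ν⁻¹) ^ (1 - s) := by
  set a : ℝ := Real.sqrt (2 * Real.pi) * ν with ha
  have ha0 : 0 < a := mul_pos (Real.sqrt_pos.2 (by positivity)) hν
  have hg : gaussPdf x * ν⁻¹ = a⁻¹ * Real.exp (-(x ^ 2) / 2) := by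
    rw [gaussPdf, ha, mul_inv]; ring
  rw [hg, Real.mul_rpow (by positivity) (Real.exp_pos _).le,
    ← Real.rpow_neg_one a, ← Real.rpow_mul ha0.le,
    ← Real.exp_mul]
  have h2 : a ^ (-s) * a ^ (-1 * (1 - s)) = a ^ (-1 : ℝ) := by
    rw [← Real.rpow_add ha0]; ring_nf
  have he : Real.exp (s * x ^ 2 / 2) * Real.exp (-x ^ 2 / 2)
      = Real.exp (-x ^ 2 / 2 * (1 - s)) := by
    rw [← Real.exp_add]; ring_nf
  rw [← he, ← h2]; ring

/-- Bound on the posterior `2k`-th moment of `(Z−τ)/ν` in the Gaussian location model: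
`E_G[((Z−τ)/ν)^{2k} | Z = z] ≤ e (2k/e)^k max(log^k(1/(√(2π) ν f_{G,ν}(z))), 1)`. -/
theorem posterior_even_moment_mgf_bound
    (G : Measure ℝ) [IsProbabilityMeasure G] (ν : ℝ) (hν : 0 < ν) (z : ℝ)
    (k : ℕ) (hk : 1 ≤ k) :
    (∫ τ, ((z - τ) / ν) ^ (2 * k) * gaussPdf ((z - τ) / ν) * ν⁻¹ ∂G) / mixDens G ν z
      ≤ Real.exp 1 * (2 * k / Real.exp 1) ^ k *
        ((Real.log (1 / (Real.sqrt (2 * Real.pi) * ν * mixDens G ν z))) ^ k ⊔ 1) := by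
  have ha0 : 0 < Real.sqrt (2 * Real.pi) * ν := mul_pos sqrtTwoPi_pos hν
  set a : ℝ := Real.sqrt (2 * Real.pi) * ν with hadef
  set g : ℝ → ℝ := fun τ => gaussPdf ((z - τ) / ν) * ν⁻¹ with hgdef
  have hgpos : ∀ τ, 0 < g τ := fun τ => mul_pos (gaussPdf_pos _) (inv_pos.2 hν)
  have hgle : ∀ τ, g τ ≤ a⁻¹ := by
    intro τ; rw [hadef, mul_inv]
    exact mul_le_mul_of_nonneg_right (gaussPdf_le _) (inv_pos.2 hν).le
  have hgcont : Continuous g := by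
    apply Continuous.mul _ continuous_const
    exact continuous_gaussPdf.comp (by fun_prop)
  have hgint : Integrable g G := by
    apply Integrable.mono' (integrable_const a⁻¹) hgcont.aestronglyMeasurable
    exact Filter.Eventually.of_forall fun τ => by
      rw [Real.norm_eq_abs, abs_of_pos (hgpos τ)]; exact hgle τ
  have hfdefn : mixDens G ν z = ∫ τ, g τ ∂G := rfl
  set f := mixDens G ν z with hf
  have hfpos : 0 < f := by
    rw [hfdefn, integral_pos_iff_support_of_nonneg (fun τ => (hgpos τ).le) hgint]
    have hs : Function.support g = Set.univ := Set.eq_univ_of_forall fun τ => (hgpos τ).ne'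
    rw [hs]; simp
  have hfle : f ≤ a⁻¹ := by
    rw [hfdefn]
    calc ∫ τ, g τ ∂G ≤ ∫ _, a⁻¹ ∂G := integral_mono hgint (integrable_const _) hgle
      _ = a⁻¹ := by simp
  have hafpos : 0 < a * f := mul_pos ha0 hfpos
  have haf1 : a * f ≤ 1 := by
    calc a * f ≤ a * a⁻¹ := mul_le_mul_of_nonneg_left hfle ha0.le
      _ = 1 := mul_inv_cancel₀ ha0.ne'
  set L : ℝ := Real.log (1 / (a * f)) with hLdef
  have hL0 : 0 ≤ L := Real.log_nonneg (one_le_one_div hafpos haf1)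
  -- main chain for any s ∈ (0,1]
  have main : ∀ s : ℝ, 0 < s → s ≤ 1 →
      (∫ τ, ((z - τ) / ν) ^ (2 * k) * gaussPdf ((z - τ) / ν) * ν⁻¹ ∂G)
        ≤ (2 * (k : ℝ) / (Real.exp 1 * s)) ^ k * Real.exp (s * L) * f := by
    intro s hs hs1
    set C : ℝ := (2 * (k : ℝ) / (Real.exp 1 * s)) ^ k with hCdef
    have hC0 : 0 ≤ C := by
      rw [hCdef]
      apply pow_nonneg
      positivity
    have hmom_le : ∀ τ, ((z - τ) / ν) ^ (2 * k) * gaussPdf ((z - τ) / ν) * ν⁻¹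
        ≤ C * (Real.exp (s * ((z - τ) / ν) ^ 2 / 2) * g τ) := by
      intro τ
      calc ((z - τ) / ν) ^ (2 * k) * gaussPdf ((z - τ) / ν) * ν⁻¹
          = ((z - τ) / ν) ^ (2 * k) * g τ := by rw [hgdef, mul_assoc]
        _ ≤ (C * Real.exp (s * ((z - τ) / ν) ^ 2 / 2)) * g τ :=
            mul_le_mul_of_nonneg_right (key_pow k hk hs _) (hgpos τ).le
        _ = C * (Real.exp (s * ((z - τ) / ν) ^ 2 / 2) * g τ) := by ring
    have hmgf : ∀ τ, Real.exp (s * ((z - τ) / ν) ^ 2 / 2) * g τ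
        = a ^ (-s) * (g τ) ^ (1 - s) := fun τ => mgf_eq hν _
    have hrint : Integrable (fun τ => (g τ) ^ (1 - s)) G := by
      apply Integrable.mono' (integrable_const ((a⁻¹ : ℝ) ^ (1 - s)))
        ((hgcont.rpow_const (fun τ => Or.inr (by linarith))).aestronglyMeasurable)
      exact Filter.Eventually.of_forall fun τ => by
        rw [Real.norm_eq_abs, abs_of_pos (Real.rpow_pos_of_pos (hgpos τ) _)]
        exact Real.rpow_le_rpow (hgpos τ).le (hgle τ) (by linarith)
    -- Jensen via Young
    have hJ : ∫ τ, (g τ) ^ (1 - s) ∂G ≤ f ^ (1 - s) := by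
      have hyoung : ∀ τ, (g τ) ^ (1 - s) * f ^ s ≤ (1 - s) * g τ + s * f := fun τ =>
        Real.geom_mean_le_arith_mean2_weighted (by linarith) hs.le (hgpos τ).le hfpos.le
          (by ring)
      have hint2 : Integrable (fun τ => (1 - s) * g τ + s * f) G :=
        (hgint.const_mul _).add (integrable_const _)
      have h2 : (∫ τ, (g τ) ^ (1 - s) ∂G) * f ^ s ≤ f := by
        rw [← integral_mul_const]
        calc ∫ τ, (g τ) ^ (1 - s) * f ^ s ∂G ≤ ∫ τ, ((1 - s) * g τ + s * f) ∂G :=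
              integral_mono (hrint.mul_const _) hint2 hyoung
          _ = (1 - s) * (∫ τ, g τ ∂G) + s * f := by
              rw [integral_add (hgint.const_mul _) (integrable_const _),
                integral_const_mul, integral_const]; simp
          _ = f := by rw [← hfdefn]; ring
      have hfs : 0 < f ^ s := Real.rpow_pos_of_pos hfpos s
      have hfss : f ^ (1 - s) * f ^ s = f := by
        rw [← Real.rpow_add hfpos]; norm_num
      exact le_of_mul_le_mul_right (by rw [hfss]; exact h2) hfs
    have heq : (fun τ => C * (Real.exp (s * ((z - τ) / ν) ^ 2 / 2) * g τ))
        = fun τ => (C * a ^ (-s)) * (g τ) ^ (1 - s) := funext fun τ => by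
      rw [hmgf τ]; ring
    have hint3 : Integrable (fun τ => C * (Real.exp (s * ((z - τ) / ν) ^ 2 / 2) * g τ)) G := by
      rw [heq]; exact hrint.const_mul _
    have hcontx : Continuous (fun τ : ℝ => (z - τ) / ν) := by fun_prop
    have hint1 : Integrable
        (fun τ => ((z - τ) / ν) ^ (2 * k) * gaussPdf ((z - τ) / ν) * ν⁻¹) G := by
      apply Integrable.mono' (integrable_const (C * a ^ (-s) * (a⁻¹ : ℝ) ^ (1 - s)))
      · exact (((hcontx.pow _).mul (continuous_gaussPdf.comp hcontx)).mul
          continuous_const).aestronglyMeasurable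
      · refine Filter.Eventually.of_forall fun τ => ?_
        have hnn : 0 ≤ ((z - τ) / ν) ^ (2 * k) * gaussPdf ((z - τ) / ν) * ν⁻¹ := by
          rw [pow_mul]
          exact mul_nonneg (mul_nonneg (pow_nonneg (sq_nonneg _) _)
            (gaussPdf_pos _).le) (inv_nonneg.2 hν.le)
        rw [Real.norm_eq_abs, abs_of_nonneg hnn]
        calc ((z - τ) / ν) ^ (2 * k) * gaussPdf ((z - τ) / ν) * ν⁻¹
            ≤ C * (Real.exp (s * ((z - τ) / ν) ^ 2 / 2) * g τ) := hmom_le τ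
          _ = C * a ^ (-s) * (g τ) ^ (1 - s) := by rw [hmgf τ]; ring
          _ ≤ C * a ^ (-s) * (a⁻¹ : ℝ) ^ (1 - s) := by
              exact mul_le_mul_of_nonneg_left
                (Real.rpow_le_rpow (hgpos τ).le (hgle τ) (by linarith))
                (mul_nonneg hC0 (Real.rpow_nonneg ha0.le _))
    -- put it together
    have hstep : (∫ τ, ((z - τ) / ν) ^ (2 * k) * gaussPdf ((z - τ) / ν) * ν⁻¹ ∂G)
        ≤ C * a ^ (-s) * f ^ (1 - s) := by
      calc (∫ τ, ((z - τ) / ν) ^ (2 * k) * gaussPdf ((z - τ) / ν) * ν⁻¹ ∂G)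
          ≤ ∫ τ, C * (Real.exp (s * ((z - τ) / ν) ^ 2 / 2) * g τ) ∂G :=
            integral_mono hint1 hint3 hmom_le
        _ = (C * a ^ (-s)) * ∫ τ, (g τ) ^ (1 - s) ∂G := by
            rw [heq, integral_const_mul]
        _ ≤ (C * a ^ (-s)) * f ^ (1 - s) := by
            apply mul_le_mul_of_nonneg_left hJ; positivity
    have hid : a ^ (-s) * f ^ (1 - s) = Real.exp (s * L) * f := by
      have h1 : f ^ (1 - s) = f ^ (-s) * f := by
        rw [show (1 - s) = -s + 1 by ring, Real.rpow_add hfpos, Real.rpow_one]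
      rw [h1, ← mul_assoc, ← Real.mul_rpow ha0.le hfpos.le,
        Real.rpow_def_of_pos hafpos]
      congr 2
      rw [hLdef, one_div, Real.log_inv]; ring
    calc (∫ τ, ((z - τ) / ν) ^ (2 * k) * gaussPdf ((z - τ) / ν) * ν⁻¹ ∂G)
        ≤ C * a ^ (-s) * f ^ (1 - s) := hstep
      _ = C * Real.exp (s * L) * f := by rw [mul_assoc, hid, ← mul_assoc]
  -- now the case analysis
  rw [div_le_iff₀ hfpos]
  have hE : (0:ℝ) < Real.exp 1 := Real.exp_pos 1
  rcases le_or_gt L (k : ℝ) with hLk | hLk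
  · -- s = 1
    have h1 := main 1 one_pos le_rfl
    have hexp : Real.exp (1 * L) ≤ Real.exp 1 * (L ^ k ⊔ 1) := by
      rw [one_mul]
      rcases le_or_gt L 1 with hL1 | hL1
      · calc Real.exp L ≤ Real.exp 1 := Real.exp_le_exp.2 hL1
          _ = Real.exp 1 * 1 := (mul_one _).symm
          _ ≤ _ := mul_le_mul_of_nonneg_left (le_max_right _ _) hE.le
      · have hLpos : 0 < L := lt_trans one_pos hL1
        have hlogL : L - 1 ≤ (k : ℝ) * Real.log L := by
          have h := sub_one_le_mul_log hLpos
          have hlogpos : 0 ≤ Real.log L := Real.log_nonneg hL1.le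
          nlinarith
        have hel : Real.exp L ≤ Real.exp 1 * L ^ k := by
          have hLk' : L ^ k = Real.exp ((k : ℝ) * Real.log L) := by
            rw [← Real.log_pow, Real.exp_log (by positivity)]
          rw [hLk', ← Real.exp_add, Real.exp_le_exp]; linarith
        exact hel.trans (mul_le_mul_of_nonneg_left (le_max_left _ _) hE.le)
    calc (∫ τ, ((z - τ) / ν) ^ (2 * k) * gaussPdf ((z - τ) / ν) * ν⁻¹ ∂G)
        ≤ (2 * (k : ℝ) / (Real.exp 1 * 1)) ^ k * Real.exp (1 * L) * f := h1
      _ = (2 * (k : ℝ) / Real.exp 1) ^ k * Real.exp (1 * L) * f := by rw [mul_one]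
      _ ≤ (2 * (k : ℝ) / Real.exp 1) ^ k * (Real.exp 1 * (L ^ k ⊔ 1)) * f := by
          apply mul_le_mul_of_nonneg_right _ hfpos.le
          exact mul_le_mul_of_nonneg_left hexp (by positivity)
      _ = Real.exp 1 * (2 * (k : ℝ) / Real.exp 1) ^ k * (L ^ k ⊔ 1) * f := by ring
  · -- s = k / L
    have hk1 : (1 : ℝ) ≤ (k : ℝ) := by exact_mod_cast hk
    have hL1 : (1 : ℝ) < L := lt_of_le_of_lt hk1 hLk
    have hLpos : 0 < L := lt_trans one_pos hL1
    have hkpos : (0 : ℝ) < (k : ℝ) := lt_of_lt_of_le one_pos hk1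
    have hs : 0 < (k : ℝ) / L := div_pos hkpos hLpos
    have hs1 : (k : ℝ) / L ≤ 1 := (div_le_one hLpos).2 hLk.le
    have h1 := main ((k : ℝ) / L) hs hs1
    have hsL : (k : ℝ) / L * L = (k : ℝ) := div_mul_cancel₀ _ hLpos.ne'
    have hCeq : 2 * (k : ℝ) / (Real.exp 1 * ((k : ℝ) / L)) = 2 * L / Real.exp 1 := by
      field_simp
    have hmax : (L ^ k ⊔ 1) = L ^ k := max_eq_left (one_le_pow₀ hL1.le)
    have hek : Real.exp ((k : ℝ)) ≤ Real.exp 1 * (k : ℝ) ^ k := by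
      have hkk : (k : ℝ) ^ k = Real.exp ((k : ℝ) * Real.log k) := by
        rw [← Real.log_pow, Real.exp_log (by positivity)]
      rw [hkk, ← Real.exp_add, Real.exp_le_exp]
      have := sub_one_le_mul_log hkpos
      linarith
    have hscalar : (2 * L / Real.exp 1) ^ k * Real.exp ((k : ℝ))
        ≤ Real.exp 1 * (2 * (k : ℝ) / Real.exp 1) ^ k * L ^ k := by
      have hexpk : Real.exp ((k : ℝ)) = (Real.exp 1) ^ k := by
        rw [← Real.exp_nat_mul]; norm_num
      have e1 : (2 * L / Real.exp 1) ^ k * Real.exp ((k : ℝ)) = (2 * L) ^ k := by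
        rw [hexpk, ← mul_pow, div_mul_cancel₀ _ hE.ne']
      have h2 : Real.exp 1 ^ k ≤ Real.exp 1 * (k : ℝ) ^ k := by rw [← hexpk]; exact hek
      rw [e1, mul_pow 2 L, div_pow, mul_pow 2 (k:ℝ),
        show Real.exp 1 * (2 ^ k * (k:ℝ) ^ k / Real.exp 1 ^ k) * L ^ k
          = (2 ^ k * (Real.exp 1 * (k:ℝ) ^ k) * L ^ k) / Real.exp 1 ^ k by ring,
        le_div_iff₀ (by positivity : (0:ℝ) < (Real.exp 1) ^ k)]
      nlinarith [mul_le_mul_of_nonneg_left h2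
        (show (0:ℝ) ≤ 2 ^ k * L ^ k by positivity)]
    calc (∫ τ, ((z - τ) / ν) ^ (2 * k) * gaussPdf ((z - τ) / ν) * ν⁻¹ ∂G)
        ≤ (2 * (k : ℝ) / (Real.exp 1 * ((k : ℝ) / L))) ^ k
            * Real.exp ((k : ℝ) / L * L) * f := h1
      _ = (2 * L / Real.exp 1) ^ k * Real.exp ((k : ℝ)) * f := by rw [hCeq, hsL]
      _ ≤ (Real.exp 1 * (2 * (k : ℝ) / Real.exp 1) ^ k * L ^ k) * f :=
          mul_le_mul_of_nonneg_right hscalar hfpos.le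
      _ = Real.exp 1 * (2 * (k : ℝ) / Real.exp 1) ^ k * (L ^ k ⊔ 1) * f := by
          rw [hmax]
end
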